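/- arXiv:2404.11494 — 2 statements merged into one kernel-verified Lean document; each statement's English description precedes it below -/
import Mathlib

section
/- Let M₀ be a Puiseux monoid satisfying the ACCP with 1 ∈ M₀ and 1 not an atom of M₀, and let N be a numerical monoid containing a prime p with p > max 𝒜(N) and v_p(q) ≥ 0 for all nonzero q ∈ M₀. Then in M = M₀ + p^{-1}N, the length set of 1 satisfies L_M(1) = L_{M₀}(1) ∪ L_N(p). -/
/-!
Write elements of `M` as `a + b / p` with `a ∈ M₀`, `b ∈ N`. Since `p` divides no denominator
of `M₀`, an equality `a + b / p = a' + b' / p` forces `a' - a` to be an integer `z` with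
`b = b' + p z`. Hence the atoms of `M` are the atoms of `M₀` (no positive integer is an atom
of `M₀`, because `1` is not) together with the `b / p` for atoms `b < p` of `N`, and a
factorization of `1` in `M` sums to `a + b / p = 1`, which leaves only `(a, b) = (1, 0)`,
a factorization in `M₀`, or `(a, b) = (0, p)`, a factorization of `p` in `N`.
-/

/-- An atom of the additive submonoid `M`: a nonzero element of `M` that is not the
sum of two nonzero elements of `M`. -/
def IsAtomOf {α : Type*} [AddCommMonoid α] (M : AddSubmonoid α) (a : α) : Prop :=
  a ∈ M ∧ a ≠ 0 ∧ ∀ b ∈ M, ∀ c ∈ M, b + c = a → b = 0 ∨ c = 0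

/-- The length set of `q` in `M`: the set of all `ℓ` such that `q` is a sum of `ℓ`
atoms of `M` (counted with multiplicity). -/
def LengthSet {α : Type*} [AddCommMonoid α] (M : AddSubmonoid α) (q : α) : Set ℕ :=
  {ℓ | ∃ s : Multiset α, Multiset.card s = ℓ ∧ (∀ a ∈ s, IsAtomOf M a) ∧ s.sum = q}

/-- The additive submonoid `M` satisfies the ACCP: every ascending chain of principal
ideals `f n + M ⊆ f (n+1) + M` stabilizes. -/
def AddACCP {α : Type*} [AddCommMonoid α] (M : AddSubmonoid α) : Prop :=
  ∀ f : ℕ → α, (∀ n, f n ∈ M) → (∀ n, ∃ c ∈ M, f n = f (n + 1) + c) →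
    ∃ N, ∀ n ≥ N, ∃ c ∈ M, f n = f N + c

/-- The Puiseux monoid generated by the reciprocals of the elements of `P`. -/
def MP (P : Set ℕ) : AddSubmonoid ℚ :=
  AddSubmonoid.closure {q : ℚ | ∃ p ∈ P, q = 1 / (p : ℚ)}

/-- The additive monoid homomorphism `ℕ →+ ℚ` sending `n` to `n / p`. -/
def scaleRecip (p : ℕ) : ℕ →+ ℚ where
  toFun n := (n : ℚ) / (p : ℚ)
  map_zero' := by simp
  map_add' := fun a b => by push_cast; ring

section Atoms

variable {α β : Type*} [AddCommMonoid α] [AddCommMonoid β]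

theorem IsAtomOf.of_le {M₀ M : AddSubmonoid α} (hle : M₀ ≤ M) {x : α} (h : IsAtomOf M x)
    (hx : x ∈ M₀) : IsAtomOf M₀ x :=
  ⟨hx, h.2.1, fun b hb c hc => h.2.2 b (hle hb) c (hle hc)⟩

theorem IsAtomOf.of_map {N : AddSubmonoid β} {M : AddSubmonoid α} (f : β →+ α)
    (hf : Function.Injective f) (hle : N.map f ≤ M) {b : β} (hb : b ∈ N)
    (h : IsAtomOf M (f b)) : IsAtomOf N b := by
  have hf0 : ∀ {c}, f c = 0 → c = 0 := fun hc => hf (hc.trans (map_zero f).symm)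
  refine ⟨hb, fun h0 => h.2.1 (by rw [h0, map_zero]), fun b₁ h₁ b₂ h₂ hsum => ?_⟩
  exact (h.2.2 _ (hle ⟨b₁, h₁, rfl⟩) _ (hle ⟨b₂, h₂, rfl⟩) (by rw [← map_add, hsum])).imp hf0 hf0

theorem lengthSet_subset_of_map {N : AddSubmonoid β} {M : AddSubmonoid α} (f : β →+ α)
    (hf : ∀ b, IsAtomOf N b → IsAtomOf M (f b)) (q : β) :
    LengthSet N q ⊆ LengthSet M (f q) := by
  rintro ℓ ⟨s, rfl, hs, rfl⟩
  refine ⟨s.map f, Multiset.card_map f s, ?_, (map_multiset_sum f s).symm⟩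
  simpa only [Multiset.mem_map, forall_exists_index, and_imp, forall_apply_eq_imp_iff₂]
    using fun b hb => hf b (hs b hb)

theorem eq_zero_of_sum_eq_zero_of_isAtomOf [PartialOrder α] [IsOrderedAddMonoid α]
    {M : AddSubmonoid α} (hM : ∀ x ∈ M, 0 ≤ x) {s : Multiset α}
    (hs : ∀ x ∈ s, IsAtomOf M x) (h : s.sum = 0) : s = 0 :=
  Multiset.eq_zero_of_forall_notMem fun x hx =>
    (hs x hx).2.1 (Multiset.all_zero_of_le_zero_le_of_sum_eq_zero
      (fun y hy => hM y (hs y hy).1) h x hx)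

theorem not_isAtomOf_natCast {R : Type*} [AddCommMonoidWithOne R] [CharZero R]
    {M : AddSubmonoid R} (h1 : (1 : R) ∈ M) (h1na : ¬ IsAtomOf M 1) :
    ∀ n : ℕ, ¬ IsAtomOf M (n : R)
  | 0 => fun h => h.2.1 Nat.cast_zero
  | 1 => by simpa only [Nat.cast_one] using h1na
  | n + 2 => fun h => by
    have hn : ((n + 1 : ℕ) : R) ∈ M := by simpa using nsmul_mem h1 (n + 1)
    rcases h.2.2 1 h1 _ hn (by rw [add_comm]; exact (Nat.cast_succ (n + 1)).symm) with h' | h'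
    · exact one_ne_zero h'
    · exact Nat.cast_ne_zero.2 n.succ_ne_zero h'

end Atoms

theorem Multiset.exists_map_eq_of_forall_mem {α β : Type*} {f : α → β} {P : α → Prop}
    {s : Multiset β} (h : ∀ x ∈ s, ∃ a, P a ∧ f a = x) :
    ∃ t : Multiset α, t.map f = s ∧ ∀ a ∈ t, P a := by
  choose g hg using h
  refine ⟨s.attach.map fun x => g x.1 x.2, ?_, ?_⟩
  · rw [Multiset.map_map]
    conv_rhs => rw [← Multiset.attach_map_val s]
    exact Multiset.map_congr rfl fun x _ => (hg x.1 x.2).2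
  · simp only [Multiset.mem_map, Multiset.mem_attach, true_and, forall_exists_index]
    rintro _ x rfl
    exact (hg x.1 x.2).1

@[simp]
theorem scaleRecip_apply (p n : ℕ) : scaleRecip p n = n / p := rfl

theorem scaleRecip_injective {p : ℕ} (hp : p ≠ 0) : Function.Injective (scaleRecip p) :=
  fun m n h => by
    simpa [div_left_inj' ((Nat.cast_ne_zero (R := ℚ)).2 hp)] using h

theorem exists_int_of_add_scaleRecip_eq {p : ℕ} (hp : p.Prime) {a a' : ℚ}
    (ha : ¬ p ∣ a.den) (ha' : ¬ p ∣ a'.den) {b b' : ℕ}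
    (h : a + scaleRecip p b = a' + scaleRecip p b') :
    ∃ z : ℤ, a' = a + z ∧ (b : ℤ) = b' + p * z := by
  have hp0 : (p : ℚ) ≠ 0 := Nat.cast_ne_zero.2 hp.ne_zero
  have hmul : (a' - a) * p = b - b' := by
    simp only [scaleRecip_apply] at h
    field_simp at h
    linear_combination -h
  have hq : a' - a = Rat.divInt ((b : ℤ) - b') p := by
    rw [Rat.divInt_eq_div]
    push_cast
    rw [eq_div_iff hp0]
    exact hmul
  have hden : (a' - a).den = 1 := by
    have hdvd : (a' - a).den ∣ p := by exact_mod_cast hq ▸ Rat.den_dvd _ _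
    refine (hp.eq_one_or_self_of_dvd _ hdvd).resolve_right fun hpq => ?_
    have : p ∣ a'.den * a.den := hpq ▸ Rat.sub_den_dvd a' a
    exact (hp.dvd_mul.1 this).elim ha' ha
  have hnum := Rat.coe_int_num_of_den_eq_one hden
  refine ⟨(a' - a).num, by rw [hnum]; ring, ?_⟩
  have : ((b : ℤ) : ℚ) = ((b' + p * (a' - a).num : ℤ) : ℚ) := by
    push_cast
    rw [hnum]
    linear_combination -hmul
  exact_mod_cast this

section PuiseuxSum

variable {M₀ : AddSubmonoid ℚ} {N : AddSubmonoid ℕ} {p : ℕ}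

theorem mem_sup_map_scaleRecip_iff {x : ℚ} :
    x ∈ M₀ ⊔ N.map (scaleRecip p) ↔ ∃ a ∈ M₀, ∃ b ∈ N, a + scaleRecip p b = x := by
  simp only [AddSubmonoid.mem_sup, AddSubmonoid.mem_map, exists_exists_and_eq_and]

theorem add_scaleRecip_eq_one_cases (hp : p.Prime) {a : ℚ} (ha₀ : 0 ≤ a) (ha : ¬ p ∣ a.den)
    {b : ℕ} (h : a + scaleRecip p b = 1) : (a = 1 ∧ b = 0) ∨ (a = 0 ∧ b = p) := by
  obtain ⟨z, haz, hbz⟩ := exists_int_of_add_scaleRecip_eq (a' := 1) (b' := 0) hp ha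
    (by simpa using hp.not_dvd_one) (by rw [h, map_zero, add_zero])
  push_cast at hbz
  have hz₀ : 0 ≤ z := by nlinarith [hp.pos]
  have hz₁ : z ≤ 1 := by exact_mod_cast (by linarith : (z : ℚ) ≤ 1)
  interval_cases z
  · left; constructor <;> [(push_cast at haz; linarith); omega]
  · right; constructor <;> [(push_cast at haz; linarith); omega]

theorem isAtomOf_sup_of_isAtomOf_left (hp : p.Prime) (hden : ∀ q ∈ M₀, ¬ p ∣ q.den)
    (h1 : (1 : ℚ) ∈ M₀) (h1na : ¬ IsAtomOf M₀ 1) {c : ℚ} (hc : IsAtomOf M₀ c) :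
    IsAtomOf (M₀ ⊔ N.map (scaleRecip p)) c := by
  refine ⟨AddSubmonoid.mem_sup_left hc.1, hc.2.1, fun x hx y hy hxy => ?_⟩
  obtain ⟨a₁, ha₁, b₁, hb₁, rfl⟩ := mem_sup_map_scaleRecip_iff.1 hx
  obtain ⟨a₂, ha₂, b₂, hb₂, rfl⟩ := mem_sup_map_scaleRecip_iff.1 hy
  have ha := add_mem ha₁ ha₂
  obtain ⟨z, hcz, hbz⟩ := exists_int_of_add_scaleRecip_eq (b := b₁ + b₂) (b' := 0) hp
    (hden _ ha) (hden c hc.1) (by rw [← hxy, map_add, map_zero]; ring)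
  push_cast at hbz
  lift z to ℕ using by nlinarith [hp.pos]
  -- `c = (a₁ + a₂) + z` splits `c` in `M₀`, and `c = z` is impossible.
  have hz : z = 0 := by
    have hzM : ((z : ℤ) : ℚ) ∈ M₀ := by simpa using nsmul_mem h1 z
    rcases hc.2.2 _ ha _ hzM hcz.symm with h | h
    · rw [h, zero_add, Int.cast_natCast] at hcz
      exact (not_isAtomOf_natCast h1 h1na z (hcz ▸ hc)).elim
    · exact_mod_cast h
  subst hz
  obtain ⟨rfl, rfl⟩ : b₁ = 0 ∧ b₂ = 0 := by omega
  simp only [map_zero, add_zero] at hxy ⊢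
  exact hc.2.2 a₁ ha₁ a₂ ha₂ hxy

theorem isAtomOf_sup_of_isAtomOf_right (hp : p.Prime) (hpos : ∀ x ∈ M₀, 0 ≤ x)
    (hden : ∀ q ∈ M₀, ¬ p ∣ q.den) {b : ℕ} (hbp : b < p) (hb : IsAtomOf N b) :
    IsAtomOf (M₀ ⊔ N.map (scaleRecip p)) (scaleRecip p b) := by
  refine ⟨AddSubmonoid.mem_sup_right ⟨b, hb.1, rfl⟩,
    fun h => hb.2.1 (scaleRecip_injective hp.ne_zero (h.trans (map_zero _).symm)),
    fun x hx y hy hxy => ?_⟩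
  obtain ⟨a₁, ha₁, b₁, hb₁, rfl⟩ := mem_sup_map_scaleRecip_iff.1 hx
  obtain ⟨a₂, ha₂, b₂, hb₂, rfl⟩ := mem_sup_map_scaleRecip_iff.1 hy
  have h₁ := hpos a₁ ha₁
  have h₂ := hpos a₂ ha₂
  obtain ⟨z, haz, hbz⟩ := exists_int_of_add_scaleRecip_eq (b := b₁ + b₂) (a' := 0) hp
    (hden _ (add_mem ha₁ ha₂)) (by simpa using hp.not_dvd_one)
    (by rw [← hxy, map_add, zero_add]; ring)
  push_cast at haz hbz
  -- `b < p` forces `z ≥ 0`, while `a₁ + a₂ = -z` forces `z ≤ 0`.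
  have hz₀ : 0 ≤ z := by nlinarith
  have hz : z = 0 := le_antisymm (by exact_mod_cast (by linarith : (z : ℚ) ≤ 0)) hz₀
  subst hz
  rw [Int.cast_zero, add_zero] at haz
  obtain ⟨rfl, rfl⟩ : a₁ = 0 ∧ a₂ = 0 := by constructor <;> linarith
  simp only [zero_add]
  exact (hb.2.2 b₁ hb₁ b₂ hb₂ (by omega)).imp (by simp +contextual) (by simp +contextual)

theorem isAtomOf_sup_cases (hp : p ≠ 0) {x : ℚ} (hx : IsAtomOf (M₀ ⊔ N.map (scaleRecip p)) x) :
    IsAtomOf M₀ x ∨ ∃ b, IsAtomOf N b ∧ scaleRecip p b = x := by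
  obtain ⟨a, ha, b, hb, rfl⟩ := mem_sup_map_scaleRecip_iff.1 hx.1
  rcases hx.2.2 a (AddSubmonoid.mem_sup_left ha) _
      (AddSubmonoid.mem_sup_right ⟨b, hb, rfl⟩) rfl with rfl | h
  · rw [zero_add] at hx ⊢
    exact .inr ⟨b, hx.of_map _ (scaleRecip_injective hp) le_sup_right hb, rfl⟩
  · rw [h, add_zero] at hx ⊢
    exact .inl (hx.of_le le_sup_left ha)

theorem exists_eq_add_map_of_isAtomOf_sup (hp : p ≠ 0) {s : Multiset ℚ}
    (hs : ∀ x ∈ s, IsAtomOf (M₀ ⊔ N.map (scaleRecip p)) x) :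
    ∃ s₀ : Multiset ℚ, ∃ t : Multiset ℕ, s = s₀ + t.map (scaleRecip p) ∧
      (∀ x ∈ s₀, IsAtomOf M₀ x) ∧ ∀ b ∈ t, IsAtomOf N b := by
  classical
  obtain ⟨t, ht, htN⟩ := Multiset.exists_map_eq_of_forall_mem
    (s := s.filter fun x => ¬ IsAtomOf M₀ x) fun x hx => by
      rw [Multiset.mem_filter] at hx
      exact (isAtomOf_sup_cases hp (hs x hx.1)).resolve_left hx.2
  refine ⟨s.filter (IsAtomOf M₀), t, ?_, fun x hx => (Multiset.mem_filter.1 hx).2, htN⟩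
  rw [ht, Multiset.filter_add_not]

theorem lengthSet_sup_one_subset (hp : p.Prime) (hpos : ∀ x ∈ M₀, 0 ≤ x)
    (hden : ∀ q ∈ M₀, ¬ p ∣ q.den) :
    LengthSet (M₀ ⊔ N.map (scaleRecip p)) 1 ⊆ LengthSet M₀ 1 ∪ LengthSet N p := by
  rintro ℓ ⟨s, rfl, hs, hsum⟩
  obtain ⟨s₀, t, rfl, hs₀, ht⟩ := exists_eq_add_map_of_isAtomOf_sup hp.ne_zero hs
  have hs₀M := AddSubmonoid.multiset_sum_mem M₀ s₀ fun x hx => (hs₀ x hx).1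
  rw [Multiset.sum_add, ← map_multiset_sum] at hsum
  rcases add_scaleRecip_eq_one_cases hp (hpos _ hs₀M) (hden _ hs₀M) hsum with
    ⟨hs₀1, ht0⟩ | ⟨hs₀0, htp⟩
  · obtain rfl := eq_zero_of_sum_eq_zero_of_isAtomOf (fun b _ => Nat.zero_le b) ht ht0
    exact .inl ⟨s₀, by simp, hs₀, hs₀1⟩
  · obtain rfl := eq_zero_of_sum_eq_zero_of_isAtomOf hpos hs₀ hs₀0
    exact .inr ⟨t, by simp, ht, htp⟩

end PuiseuxSum

theorem stmt14_general (M₀ : AddSubmonoid ℚ) (hpos : ∀ x ∈ M₀, 0 ≤ x)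
    (h1 : (1 : ℚ) ∈ M₀) (h1na : ¬ IsAtomOf M₀ 1)
    (N : AddSubmonoid ℕ)
    (p : ℕ) (hp : p.Prime)
    (hmax : ∀ a : ℕ, IsAtomOf N a → a < p)
    (hval : ∀ q : ℚ, q ∈ M₀ → q ≠ 0 → ¬ (p ∣ q.den))
    (M : AddSubmonoid ℚ)
    (hM : (M : Set ℚ) =
      {x | ∃ a ∈ M₀, ∃ b ∈ AddSubmonoid.map (scaleRecip p) N, x = a + b}) :
    LengthSet M 1 = LengthSet M₀ 1 ∪ LengthSet N p := by
  obtain rfl : M = M₀ ⊔ N.map (scaleRecip p) := SetLike.coe_injective <| hM.trans <| by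
    ext x
    simp only [Set.mem_ofPred_eq, SetLike.mem_coe, AddSubmonoid.mem_sup, eq_comm]
  have hden : ∀ q ∈ M₀, ¬ p ∣ q.den := fun q hq => by
    rcases eq_or_ne q 0 with rfl | hq0
    · simpa using hp.not_dvd_one
    · exact hval q hq hq0
  have hp1 : scaleRecip p p = 1 := by simp [hp.ne_zero]
  refine (lengthSet_sup_one_subset hp hpos hden).antisymm (Set.union_subset ?_ ?_)
  · exact lengthSet_subset_of_map (AddMonoidHom.id ℚ)
      (fun _ ha => isAtomOf_sup_of_isAtomOf_left hp hden h1 h1na ha) 1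
  · exact hp1 ▸ lengthSet_subset_of_map (scaleRecip p)
      (fun b hb => isAtomOf_sup_of_isAtomOf_right hp hpos hden (hmax b hb) hb) p

theorem stmt14 (M₀ : AddSubmonoid ℚ) (hpos : ∀ x ∈ M₀, 0 ≤ x)
    (hacc : AddACCP M₀) (h1 : (1 : ℚ) ∈ M₀) (h1na : ¬ IsAtomOf M₀ 1)
    (N : AddSubmonoid ℕ) (hnum : {n : ℕ | n ∉ N}.Finite)
    (p : ℕ) (hp : p.Prime) (hpN : p ∈ N)
    (hmax : ∀ a : ℕ, IsAtomOf N a → a < p)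
    (hval : ∀ q : ℚ, q ∈ M₀ → q ≠ 0 → ¬ (p ∣ q.den))
    (M : AddSubmonoid ℚ)
    (hM : (M : Set ℚ) =
      {x | ∃ a ∈ M₀, ∃ b ∈ AddSubmonoid.map (scaleRecip p) N, x = a + b}) :
    LengthSet M 1 = LengthSet M₀ 1 ∪ LengthSet N p :=
  stmt14_general M₀ hpos h1 h1na N p hp hmax hval M hM
end

section
/- For every nonempty subset L ⊆ ℕ_{≥2}, there exists a Puiseux monoid M satisfying the ACCP such that 1 ∈ M and the length set of 1 in M equals L. -/
open Finsupp

section Atoms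

variable {α : Type*} [AddCommMonoid α] {G : Set α} {a : α}

theorem mem_of_isAtomOf_closure (hG : (0 : α) ∉ G) (ha : IsAtomOf (AddSubmonoid.closure G) a) :
    a ∈ G := by
  obtain ⟨haM, ha0, hirr⟩ := ha
  obtain ⟨s, hsG, rfl⟩ := AddSubmonoid.exists_multiset_of_mem_closure haM
  obtain ⟨g, hg⟩ := Multiset.exists_mem_of_ne_zero fun hs : s = 0 =>
    ha0 (by rw [hs, Multiset.sum_zero])
  obtain ⟨s, rfl⟩ := Multiset.exists_cons_of_mem hg
  have hgG := hsG g (Multiset.mem_cons_self g s)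
  have hsM : s.sum ∈ AddSubmonoid.closure G := AddSubmonoid.multiset_sum_mem _ _
    fun x hx => AddSubmonoid.subset_closure (hsG x (Multiset.mem_cons_of_mem hx))
  rw [Multiset.sum_cons] at hirr ⊢
  rcases hirr g (AddSubmonoid.subset_closure hgG) s.sum hsM rfl with h | h
  · exact absurd (h ▸ hgG) hG
  · rwa [h, add_zero]

theorem isAtomOf_closure (ha : a ∈ G) (ha0 : a ≠ 0)
    (h : ∀ s : Multiset α, (∀ x ∈ s, x ∈ G) → s.sum = a → Multiset.card s = 1) :
    IsAtomOf (AddSubmonoid.closure G) a := by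
  refine ⟨AddSubmonoid.subset_closure ha, ha0, fun b hb c hc hbc => ?_⟩
  obtain ⟨s, hsG, rfl⟩ := AddSubmonoid.exists_multiset_of_mem_closure hb
  obtain ⟨t, htG, rfl⟩ := AddSubmonoid.exists_multiset_of_mem_closure hc
  have hcard := h (s + t) (fun x hx => (Multiset.mem_add.1 hx).elim (hsG x) (htG x))
    (by rw [Multiset.sum_add, hbc])
  rw [Multiset.card_add] at hcard
  rcases Nat.add_eq_one_iff.1 hcard with ⟨hs, -⟩ | ⟨-, ht⟩
  · exact Or.inl (by rw [Multiset.card_eq_zero.1 hs, Multiset.sum_zero])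
  · exact Or.inr (by rw [Multiset.card_eq_zero.1 ht, Multiset.sum_zero])

end Atoms

theorem addACCP_of_lt_add {α β : Type*} [AddCommMonoid α] [LinearOrder β] [WellFoundedLT β]
    {M : AddSubmonoid α} (Φ : α → β) (hΦ : ∀ a ∈ M, ∀ b ∈ M, b ≠ 0 → Φ a < Φ (a + b)) :
    AddACCP M := by
  intro f hf hstep
  choose c hcM hfc using hstep
  have hanti : Antitone (Φ ∘ f) := antitone_nat_of_succ_le fun n => by
    by_cases hc : c n = 0
    · simp [hfc n, hc]
    · simpa [← hfc n] using (hΦ _ (hf (n + 1)) _ (hcM n) hc).le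
  set N := Function.argmin (Φ ∘ f)
  have hconst : ∀ n ≥ N, f n = f N := by
    intro n hn
    induction n, hn using Nat.le_induction with
    | base => rfl
    | succ n hn ih =>
      have hc : c n = 0 := by
        by_contra hc
        have hlt := hΦ _ (hf (n + 1)) _ (hcM n) hc
        rw [← hfc n] at hlt
        exact (Function.argmin_le (Φ ∘ f) (n + 1)).not_gt (lt_of_lt_of_le hlt (hanti hn))
      rw [← ih, hfc n, hc, add_zero]
  exact ⟨N, fun n hn => ⟨0, M.zero_mem, by rw [hconst n hn, add_zero]⟩⟩

theorem Multiset.exists_eq_map_of_forall_mem_image {α β : Type*} {f : β → α} {K : Set β}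
    {s : Multiset α} (h : ∀ a ∈ s, a ∈ f '' K) :
    ∃ t : Multiset β, (∀ b ∈ t, b ∈ K) ∧ s = t.map f := by
  induction s using Multiset.induction with
  | empty => exact ⟨0, by simp, by simp⟩
  | cons a s ih =>
    obtain ⟨b, hb, rfl⟩ := h _ (mem_cons_self _ s)
    obtain ⟨t, htK, rfl⟩ := ih fun a ha => h a (mem_cons_of_mem ha)
    exact ⟨b ::ₘ t, fun c hc => (mem_cons.1 hc).elim (· ▸ hb) (htK c), by simp⟩

theorem Finsupp.eq_of_sum_map_single_eq_single {ι : Type*} {t : Multiset (ι × ℕ)} {j : ι} {a : ℕ}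
    (ht : ∀ e ∈ t, e.2 ≠ 0) (h : (t.map fun e => single e.1 e.2).sum = single j a) :
    (∀ e ∈ t, e.1 = j) ∧ (t.map Prod.snd).sum = a := by
  have hfst : ∀ e ∈ t, e.1 = j := by
    intro e he
    by_contra hne
    have hle : single e.1 e.2 ≤ single j a :=
      h ▸ Multiset.le_sum_of_mem (Multiset.mem_map_of_mem (fun e => single e.1 e.2) he)
    have := hle e.1
    rw [single_eq_same, single_eq_of_ne hne] at this
    exact ht e he (Nat.le_zero.1 this)
  refine ⟨hfst, ?_⟩
  have := congrArg (applyAddHom j) h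
  rw [map_multiset_sum, Multiset.map_map, applyAddHom_apply, single_eq_same] at this
  rw [← this]
  exact congrArg _ (Multiset.map_congr rfl fun e he => by simp [hfst e he])

section ReciprocalsOfPrimes

variable {ι : Type*}

theorem prime_dvd_of_sum_div_eq_int [DecidableEq ι] {p : ι → ℕ} (hp : ∀ i, (p i).Prime)
    (hinj : p.Injective) {S : Finset ι} {z : ι → ℤ} {n : ℤ}
    (h : ∑ j ∈ S, (z j : ℚ) / p j = n) {i : ι} (hi : i ∈ S) : (p i : ℤ) ∣ z i := by
  have hp0 : ∀ j, (p j : ℚ) ≠ 0 := fun j => Nat.cast_ne_zero.2 (hp j).ne_zero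
  have cleared : ∑ j ∈ S, z j * ∏ k ∈ S.erase j, (p k : ℤ) = n * ∏ k ∈ S, (p k : ℤ) := by
    have : ∑ j ∈ S, (z j : ℚ) * ∏ k ∈ S.erase j, (p k : ℚ) = n * ∏ k ∈ S, (p k : ℚ) := by
      rw [← h, Finset.sum_mul]
      refine Finset.sum_congr rfl fun j hj => ?_
      rw [← Finset.mul_prod_erase S _ hj]
      field_simp [hp0 j]
    exact_mod_cast this
  have hpi : Prime (p i : ℤ) := Nat.prime_iff_prime_int.mp (hp i)
  have hdvd_other : (p i : ℤ) ∣ ∑ j ∈ S.erase i, z j * ∏ k ∈ S.erase j, (p k : ℤ) :=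
    Finset.dvd_sum fun j hj => dvd_mul_of_dvd_right
      (Finset.dvd_prod_of_mem _ (Finset.mem_erase.2 ⟨(Finset.ne_of_mem_erase hj).symm, hi⟩)) _
  have hdvd : (p i : ℤ) ∣ z i * ∏ k ∈ S.erase i, (p k : ℤ) := by
    have : (p i : ℤ) ∣ n * ∏ k ∈ S, (p k : ℤ) :=
      dvd_mul_of_dvd_right (Finset.dvd_prod_of_mem _ hi) _
    rw [← cleared, ← Finset.add_sum_erase S _ hi] at this
    exact (dvd_add_left hdvd_other).1 this
  refine (hpi.dvd_or_dvd hdvd).resolve_right fun hprod => ?_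
  obtain ⟨k, hk, hik⟩ := (Prime.dvd_finsetProd_iff hpi _).1 hprod
  exact Finset.ne_of_mem_erase hk (hinj ((Nat.prime_dvd_prime_iff_eq (hp i) (hp k)).1
    (Int.natCast_dvd_natCast.1 hik))).symm

variable (p : ι → ℕ)

noncomputable def recipSum : (ι →₀ ℕ) →ₗ[ℕ] ℚ := linearCombination ℕ fun i => ((p i : ℚ))⁻¹

def quotSum (w : ι →₀ ℕ) : ℕ := w.sum fun i k => k / p i

def remSum (w : ι →₀ ℕ) : ℕ := w.sum fun i k => k % p i

variable {p}

theorem recipSum_apply (w : ι →₀ ℕ) : recipSum p w = w.sum fun i k => (k : ℚ) / p i := by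
  simp only [recipSum, linearCombination_apply, nsmul_eq_mul, div_eq_mul_inv]

theorem recipSum_single (i : ι) (k : ℕ) : recipSum p (single i k) = k / p i := by
  simp [recipSum_apply]

theorem Finsupp.sum_congr_of_apply_eq {M : Type*} [AddCommMonoid M] [DecidableEq ι]
    {w w' : ι →₀ ℕ} {g : ι → ℕ → M} (hg : ∀ i, g i 0 = 0) (h : ∀ i, g i (w i) = g i (w' i)) :
    w.sum g = w'.sum g := by
  rw [sum_of_support_subset w Finset.subset_union_left g fun i _ => hg i,
    sum_of_support_subset w' Finset.subset_union_right g fun i _ => hg i]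
  exact Finset.sum_congr rfl fun i _ => h i

theorem mod_eq_of_recipSum_eq (hp : ∀ i, (p i).Prime) (hinj : p.Injective) {w w' : ι →₀ ℕ}
    (h : recipSum p w = recipSum p w') (i : ι) : w i % p i = w' i % p i := by
  classical
  set S := w.support ∪ w'.support
  have hS : ∑ j ∈ S, (((w j : ℤ) - w' j : ℤ) : ℚ) / p j = ((0 : ℤ) : ℚ) := by
    have hsum : ∀ v : ι →₀ ℕ, v.support ⊆ S → recipSum p v = ∑ j ∈ S, (v j : ℚ) / p j :=
      fun v hv => by rw [recipSum_apply, sum_of_support_subset v hv _ fun j _ => by simp]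
    rw [hsum w Finset.subset_union_left, hsum w' Finset.subset_union_right] at h
    push_cast
    simp only [sub_div, Finset.sum_sub_distrib, h, sub_self]
  by_cases hi : i ∈ S
  · exact (Nat.modEq_iff_dvd.2 (prime_dvd_of_sum_div_eq_int hp hinj hS hi)).symm
  · simp only [S, Finset.mem_union, mem_support_iff, not_or, not_not] at hi
    rw [hi.1, hi.2]

theorem recipSum_eq_quotSum_add (hp : ∀ i, p i ≠ 0) (w : ι →₀ ℕ) :
    recipSum p w = quotSum p w + w.sum fun i k => ((k % p i : ℕ) : ℚ) / p i := by
  rw [recipSum_apply, quotSum, Nat.cast_finsupp_sum, ← Finsupp.sum_add]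
  refine Finsupp.sum_congr fun i _ => ?_
  have hpi : (p i : ℚ) ≠ 0 := Nat.cast_ne_zero.2 (hp i)
  conv_lhs => rw [← Nat.div_add_mod (w i) (p i)]
  push_cast
  field_simp

theorem quotSum_eq_of_recipSum_eq (hp : ∀ i, (p i).Prime) (hinj : p.Injective)
    {w w' : ι →₀ ℕ} (h : recipSum p w = recipSum p w') : quotSum p w = quotSum p w' := by
  classical
  have hp0 : ∀ i, p i ≠ 0 := fun i => (hp i).ne_zero
  have hrem : (w.sum fun i k => ((k % p i : ℕ) : ℚ) / p i)
      = w'.sum fun i k => ((k % p i : ℕ) : ℚ) / p i :=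
    Finsupp.sum_congr_of_apply_eq (by simp) fun i => by rw [mod_eq_of_recipSum_eq hp hinj h i]
  rw [recipSum_eq_quotSum_add hp0, recipSum_eq_quotSum_add hp0, hrem] at h
  exact_mod_cast add_right_cancel h

theorem remSum_eq_of_recipSum_eq (hp : ∀ i, (p i).Prime) (hinj : p.Injective)
    {w w' : ι →₀ ℕ} (h : recipSum p w = recipSum p w') : remSum p w = remSum p w' := by
  classical
  exact Finsupp.sum_congr_of_apply_eq (by simp) (mod_eq_of_recipSum_eq hp hinj h)

theorem eq_of_recipSum_eq_of_lt (hp : ∀ i, (p i).Prime) (hinj : p.Injective)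
    {w v : ι →₀ ℕ} (hv : ∀ i, v i < p i) (h : recipSum p w = recipSum p v) : w = v := by
  have hq : quotSum p w = 0 := by
    rw [quotSum_eq_of_recipSum_eq hp hinj h, quotSum]
    exact Finset.sum_eq_zero fun i _ => Nat.div_eq_of_lt (hv i)
  ext i
  have hwi : w i < p i := by
    by_cases hi : i ∈ w.support
    · have := Finset.sum_eq_zero_iff.1 hq i hi
      exact (Nat.div_eq_zero_iff.1 this).resolve_left (hp i).ne_zero
    · rw [notMem_support_iff.1 hi]; exact (hp i).pos
  rw [← Nat.mod_eq_of_lt hwi, mod_eq_of_recipSum_eq hp hinj h i, Nat.mod_eq_of_lt (hv i)]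

theorem exists_eq_single_of_recipSum_eq_one (hp : ∀ i, (p i).Prime) (hinj : p.Injective)
    {w : ι →₀ ℕ} (h : recipSum p w = 1) : ∃ j, w = single j (p j) := by
  classical
  obtain ⟨j, hj⟩ : w.support.Nonempty := support_nonempty_iff.2 (by rintro rfl; simp at h)
  have hp0 : (p j : ℚ) ≠ 0 := Nat.cast_ne_zero.2 (hp j).ne_zero
  have h1 : recipSum p w = recipSum p (single j (p j)) := by rw [h, recipSum_single, div_self hp0]
  have hmod : ∀ i, w i % p i = 0 := fun i => by
    rw [mod_eq_of_recipSum_eq hp hinj h1 i, single_apply]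
    split_ifs with hji
    · subst hji; exact Nat.mod_self _
    · exact Nat.zero_mod _
  have hq : quotSum p w = 1 := by
    rw [quotSum_eq_of_recipSum_eq hp hinj h1, quotSum, sum_single_index (Nat.zero_div (p j)),
      Nat.div_self (hp j).pos]
  have hwj : 1 ≤ w j / p j := Nat.div_pos
    (Nat.le_of_dvd (Nat.pos_of_ne_zero (mem_support_iff.1 hj)) (Nat.dvd_of_mod_eq_zero (hmod j)))
    (hp j).pos
  rw [quotSum, Finsupp.sum, ← Finset.add_sum_erase _ _ hj] at hq
  have hrest := Finset.sum_eq_zero_iff.1 (show ∑ i ∈ w.support.erase j, w i / p i = 0 by omega)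
  refine ⟨j, ext fun i => ?_⟩
  have hdecomp := Nat.div_add_mod (w i) (p i)
  rw [hmod i, add_zero] at hdecomp
  rcases eq_or_ne i j with rfl | hij
  · rw [single_eq_same, ← hdecomp, show w i / p i = 1 by omega, mul_one]
  · rw [single_eq_of_ne hij]
    by_cases hi : i ∈ w.support
    · rw [← hdecomp, hrest i (Finset.mem_erase.2 ⟨hij, hi⟩), mul_zero]
    · exact notMem_support_iff.1 hi

theorem recipSum_sum_map_single (t : Multiset (ι × ℕ)) :
    recipSum p (t.map fun e => single e.1 e.2).sum = (t.map fun e => (e.2 : ℚ) / p e.1).sum := by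
  rw [map_multiset_sum, Multiset.map_map]
  exact congrArg _ (Multiset.map_congr rfl fun e _ => recipSum_single e.1 e.2)

variable (p) in
def carryRank (w : ι →₀ ℕ) : ℕ ×ₗ ℕ := toLex (quotSum p w, remSum p w)

theorem carryRank_lt_add (u : ι →₀ ℕ) {v : ι →₀ ℕ} (hv : v ≠ 0) :
    carryRank p u < carryRank p (u + v) := by
  classical
  set U := u.support ∪ v.support
  have hsum : ∀ (x : ι →₀ ℕ), x.support ⊆ U → ∀ g : ι → ℕ → ℕ, (∀ i, g i 0 = 0) →
      x.sum g = ∑ i ∈ U, g i (x i) :=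
    fun x hx g hg => sum_of_support_subset x hx g fun i _ => hg i
  have hsuppU : (u + v).support ⊆ U := support_add
  rw [carryRank, carryRank, Prod.Lex.toLex_lt_toLex, quotSum, quotSum, remSum, remSum,
    hsum u Finset.subset_union_left _ (by simp), hsum _ hsuppU _ (by simp),
    hsum u Finset.subset_union_left _ (by simp), hsum _ hsuppU _ (by simp)]
  have hle : ∀ i ∈ U, u i / p i ≤ (u + v) i / p i :=
    fun i _ => Nat.div_le_div_right (by simp)
  rcases (Finset.sum_le_sum hle).lt_or_eq with hlt | heq
  · exact Or.inl hlt
  refine Or.inr ⟨heq, ?_⟩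
  -- no carries occur, so the remainders simply add up
  have hrem : ∀ i ∈ U, (u + v) i % p i = u i % p i + v i := by
    intro i hi
    have hdiv := (Finset.sum_eq_sum_iff_of_le hle).1 heq i hi
    have e1 := Nat.div_add_mod (u i + v i) (p i)
    have e2 := Nat.div_add_mod (u i) (p i)
    rw [coe_add, Pi.add_apply, ← hdiv] at *
    generalize p i * (u i / p i) = m at e1 e2
    omega
  obtain ⟨i, hi⟩ := support_nonempty_iff.2 hv
  have hvpos : 0 < ∑ i ∈ U, v i := lt_of_lt_of_le (Nat.pos_of_ne_zero (mem_support_iff.1 hi))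
    (Finset.single_le_sum (fun _ _ => Nat.zero_le _) (Finset.mem_union_right _ hi))
  rw [Finset.sum_congr rfl hrem, Finset.sum_add_distrib]
  omega

variable (p) in
noncomputable def recipRank (q : ℚ) : ℕ ×ₗ ℕ :=
  carryRank p (Classical.epsilon fun w => recipSum p w = q)

theorem recipRank_recipSum (hp : ∀ i, (p i).Prime) (hinj : p.Injective) (w : ι →₀ ℕ) :
    recipRank p (recipSum p w) = carryRank p w := by
  have hspec := Classical.epsilon_spec (p := fun w' => recipSum p w' = recipSum p w) ⟨w, rfl⟩
  rw [recipRank, carryRank, carryRank, quotSum_eq_of_recipSum_eq hp hinj hspec,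
    remSum_eq_of_recipSum_eq hp hinj hspec]

theorem addACCP_of_le_closure_inv (hp : ∀ i, (p i).Prime) (hinj : p.Injective)
    {M : AddSubmonoid ℚ} (hM : M ≤ AddSubmonoid.closure (Set.range fun i => ((p i : ℚ))⁻¹)) :
    AddACCP M := by
  have hrep : ∀ x ∈ M, ∃ w, recipSum p w = x := fun x hx => by
    obtain ⟨w, hw⟩ := AddSubmonoid.mem_closure_range_iff.1 (hM hx)
    exact ⟨w, by rw [hw, recipSum, linearCombination_apply]⟩
  refine addACCP_of_lt_add (recipRank p) fun a ha b hb hb0 => ?_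
  obtain ⟨u, rfl⟩ := hrep a ha
  obtain ⟨v, rfl⟩ := hrep b hb
  rw [← map_add, recipRank_recipSum hp hinj, recipRank_recipSum hp hinj]
  exact carryRank_lt_add u (by rintro rfl; exact hb0 (map_zero _))

theorem addACCP_of_le_MP {P : Set ℕ} (hP : ∀ q ∈ P, q.Prime) {M : AddSubmonoid ℚ}
    (hM : M ≤ MP P) : AddACCP M := by
  have hMP : MP P = AddSubmonoid.closure (Set.range fun q : P => ((q : ℕ) : ℚ)⁻¹) := by
    rw [MP]
    congr 1
    ext x
    simp [one_div, eq_comm]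
  exact addACCP_of_le_closure_inv (p := ((↑) : P → ℕ)) (fun q => hP q q.2) Subtype.val_injective
    (hMP ▸ hM)

end ReciprocalsOfPrimes

theorem Multiset.exists_sum_eq_and_card_eq_of_forall_eq_or_eq {s : Multiset ℕ} {a b : ℕ}
    (h : ∀ c ∈ s, c = a ∨ c = b) : ∃ x y, s.sum = x * a + y * b ∧ card s = x + y := by
  induction s using Multiset.induction with
  | empty => exact ⟨0, 0, by simp, by simp⟩
  | cons c s ih =>
    obtain ⟨x, y, hsum, hcard⟩ := ih fun d hd => h d (mem_cons_of_mem hd)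
    rw [sum_cons, card_cons, hsum, hcard]
    rcases h c (mem_cons_self c s) with rfl | rfl
    · exact ⟨x + 1, y, by ring, by ring⟩
    · exact ⟨x, y + 1, by ring, by ring⟩

theorem eq_of_mul_add_two_mul_eq {r x y x' y' : ℕ} (hr : Odd r)
    (h : x * r + 2 * y = x' * r + 2 * y') (hlt : x' * r + 2 * y' < 2 * r) : x = x' ∧ y = y' := by
  have hx : x < 2 := by by_contra! hx; nlinarith
  have hx' : x' < 2 := by by_contra! hx'; nlinarith
  obtain ⟨k, rfl⟩ := hr
  interval_cases x <;> interval_cases x' <;> omega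

namespace LengthSetRealization

-- `lenPrime ℓ ≥ 4ℓ + 2` makes `lenNum ℓ = lenPrime ℓ - 2(ℓ - 1)` exceed `lenPrime ℓ / 2`.
noncomputable def lenPrime (ℓ : ℕ) : ℕ := Nat.nth Nat.Prime (4 * ℓ)

noncomputable def lenNum (ℓ : ℕ) : ℕ := lenPrime ℓ + 2 - 2 * ℓ

def genPairs (L : Set ℕ) : Set (ℕ × ℕ) := {e | e.1 ∈ L ∧ (e.2 = lenNum e.1 ∨ e.2 = 2)}

noncomputable def genValue (e : ℕ × ℕ) : ℚ := e.2 / lenPrime e.1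

def lengthMonoid (L : Set ℕ) : AddSubmonoid ℚ := AddSubmonoid.closure (genValue '' genPairs L)

theorem lenPrime_prime (ℓ : ℕ) : (lenPrime ℓ).Prime := Nat.prime_nth_prime _

theorem lenPrime_injective : lenPrime.Injective := fun _ _ h => by
  have := Nat.nth_injective Nat.infinite_setOfPred_prime h
  omega

theorem odd_lenPrime {ℓ : ℕ} (hℓ : 1 ≤ ℓ) : Odd (lenPrime ℓ) := by
  refine (lenPrime_prime ℓ).odd_of_ne_two fun h => ?_
  have := Nat.add_two_le_nth_prime (4 * ℓ)
  rw [← lenPrime, h] at this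
  omega

theorem lenNum_add {ℓ : ℕ} (hℓ : 1 ≤ ℓ) : lenNum ℓ + 2 * (ℓ - 1) = lenPrime ℓ := by
  have := Nat.add_two_le_nth_prime (4 * ℓ)
  rw [lenNum, lenPrime]
  omega

theorem odd_lenNum {ℓ : ℕ} (hℓ : 1 ≤ ℓ) : Odd (lenNum ℓ) := by
  have := lenNum_add hℓ
  have := odd_lenPrime hℓ
  rw [Nat.odd_iff] at *
  omega

theorem lenPrime_lt_two_mul_lenNum (ℓ : ℕ) : lenPrime ℓ < 2 * lenNum ℓ := by
  have := Nat.add_two_le_nth_prime (4 * ℓ)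
  rw [lenNum, lenPrime]
  omega

theorem snd_pos_lt_of_mem_genPairs {L : Set ℕ} (hL : ∀ ℓ ∈ L, 2 ≤ ℓ) {e : ℕ × ℕ}
    (he : e ∈ genPairs L) : 0 < e.2 ∧ e.2 < lenPrime e.1 := by
  obtain ⟨ℓ, c⟩ := e
  obtain ⟨hℓ, hc⟩ := he
  dsimp only at hℓ hc ⊢
  have := hL ℓ hℓ
  have := Nat.add_two_le_nth_prime (4 * ℓ)
  rcases hc with rfl | rfl
  · have := lenNum_add (one_le_two.trans (hL ℓ hℓ))
    have := (odd_lenNum (one_le_two.trans (hL ℓ hℓ))).pos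
    omega
  · exact ⟨two_pos, by rw [lenPrime]; omega⟩

theorem card_eq_of_sum_snd_eq {j : ℕ} (hj : 1 ≤ j) {t : Multiset (ℕ × ℕ)}
    (ht : ∀ e ∈ t, e.2 = lenNum j ∨ e.2 = 2) {x y : ℕ}
    (hsum : (t.map Prod.snd).sum = x * lenNum j + 2 * y)
    (hlt : x * lenNum j + 2 * y < 2 * lenNum j) :
    Multiset.card t = x + y := by
  obtain ⟨x', y', hsum', hcard⟩ := Multiset.exists_sum_eq_and_card_eq_of_forall_eq_or_eq
    (s := t.map Prod.snd) (a := lenNum j) (b := 2) fun c hc => by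
      obtain ⟨e, he, rfl⟩ := Multiset.mem_map.1 hc
      exact ht e he
  rw [hsum', mul_comm y'] at hsum
  obtain ⟨rfl, rfl⟩ := eq_of_mul_add_two_mul_eq (odd_lenNum hj) hsum hlt
  rwa [Multiset.card_map] at hcard

theorem recipSum_sum_map_single_eq (t : Multiset (ℕ × ℕ)) :
    recipSum lenPrime (t.map fun e => Finsupp.single e.1 e.2).sum = (t.map genValue).sum :=
  recipSum_sum_map_single t

theorem isAtomOf_genValue {L : Set ℕ} (hL : ∀ ℓ ∈ L, 2 ≤ ℓ) {e : ℕ × ℕ} (he : e ∈ genPairs L) :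
    IsAtomOf (lengthMonoid L) (genValue e) := by
  obtain ⟨hpos, hlt⟩ := snd_pos_lt_of_mem_genPairs hL he
  have hpos' : genValue e ≠ 0 :=
    (div_pos (by exact_mod_cast hpos) (by exact_mod_cast (lenPrime_prime e.1).pos)).ne'
  refine isAtomOf_closure ⟨e, he, rfl⟩ hpos' fun s hs hsum => ?_
  obtain ⟨t, ht, rfl⟩ := Multiset.exists_eq_map_of_forall_mem_image hs
  obtain ⟨j, c⟩ := e
  obtain ⟨hjL, hc⟩ := he
  dsimp only at hjL hc hlt
  have hW : (t.map fun e => Finsupp.single e.1 e.2).sum = Finsupp.single j c := by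
    refine eq_of_recipSum_eq_of_lt lenPrime_prime lenPrime_injective (fun i => ?_) ?_
    · rw [Finsupp.single_apply]
      split_ifs with hji
      · exact hji ▸ hlt
      · exact (lenPrime_prime i).pos
    · rw [recipSum_sum_map_single_eq, hsum, recipSum_single, genValue]
  obtain ⟨hfst, hsnd⟩ := Finsupp.eq_of_sum_map_single_eq_single
    (fun e he => (snd_pos_lt_of_mem_genPairs hL (ht e he)).1.ne') hW
  have hj := one_le_two.trans (hL j hjL)
  have hnum : ∀ e ∈ t, e.2 = lenNum j ∨ e.2 = 2 := fun e he => hfst e he ▸ (ht e he).2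
  have hr := lenPrime_lt_two_mul_lenNum j
  rw [Multiset.card_map]
  rcases hc with rfl | rfl
  · exact card_eq_of_sum_snd_eq hj hnum (x := 1) (y := 0) (by simpa using hsnd) (by omega)
  · exact card_eq_of_sum_snd_eq hj hnum (x := 0) (y := 1) (by simpa using hsnd) (by omega)

theorem lengthSet_one_subset {L : Set ℕ} (hL : ∀ ℓ ∈ L, 2 ≤ ℓ) :
    LengthSet (lengthMonoid L) 1 ⊆ L := by
  rintro n ⟨s, rfl, hs, hsum⟩
  have hG : (0 : ℚ) ∉ genValue '' genPairs L := by
    rintro ⟨e, he, h0⟩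
    have := (snd_pos_lt_of_mem_genPairs hL he).1
    rw [genValue, div_eq_zero_iff] at h0
    exact h0.elim (by exact_mod_cast this.ne') (by exact_mod_cast (lenPrime_prime e.1).ne_zero)
  obtain ⟨t, ht, rfl⟩ := Multiset.exists_eq_map_of_forall_mem_image
    fun a ha => mem_of_isAtomOf_closure hG (hs a ha)
  obtain ⟨j, hW⟩ := exists_eq_single_of_recipSum_eq_one lenPrime_prime lenPrime_injective
    (by rw [recipSum_sum_map_single_eq, hsum])
  obtain ⟨hfst, hsnd⟩ := Finsupp.eq_of_sum_map_single_eq_single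
    (fun e he => (snd_pos_lt_of_mem_genPairs hL (ht e he)).1.ne') hW
  obtain ⟨e, he⟩ := Multiset.exists_mem_of_ne_zero (s := t) (by rintro rfl; simp at hsum)
  have hjL : j ∈ L := hfst e he ▸ (ht e he).1
  have hj := one_le_two.trans (hL j hjL)
  have hnum : ∀ e ∈ t, e.2 = lenNum j ∨ e.2 = 2 := fun e he => hfst e he ▸ (ht e he).2
  have hr := lenPrime_lt_two_mul_lenNum j
  have hadd := lenNum_add hj
  rw [Multiset.card_map, card_eq_of_sum_snd_eq hj hnum (x := 1) (y := j - 1) (by omega) (by omega)]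
  rwa [show 1 + (j - 1) = j by omega]

theorem exists_factorization_one {L : Set ℕ} {j : ℕ} (hj : j ∈ L) (hj1 : 1 ≤ j) :
    ∃ s : Multiset ℚ, Multiset.card s = j ∧ (∀ a ∈ s, a ∈ genValue '' genPairs L) ∧ s.sum = 1 := by
  refine ⟨((j, lenNum j) ::ₘ Multiset.replicate (j - 1) (j, 2)).map genValue, ?_, ?_, ?_⟩
  · simp; omega
  · simp only [Multiset.map_cons, Multiset.map_replicate, Multiset.mem_cons,
      Multiset.mem_replicate]
    rintro a (rfl | ⟨-, rfl⟩)
    · exact ⟨_, ⟨hj, Or.inl rfl⟩, rfl⟩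
    · exact ⟨_, ⟨hj, Or.inr rfl⟩, rfl⟩
  · have hp : (lenPrime j : ℚ) ≠ 0 := Nat.cast_ne_zero.2 (lenPrime_prime j).ne_zero
    have hadd : (lenNum j : ℚ) + 2 * (j - 1 : ℕ) = lenPrime j := by exact_mod_cast lenNum_add hj1
    simp only [Multiset.map_cons, Multiset.map_replicate, Multiset.sum_cons,
      Multiset.sum_replicate, nsmul_eq_mul, genValue]
    field_simp
    push_cast
    linarith

theorem lengthMonoid_le_MP (L : Set ℕ) : lengthMonoid L ≤ MP (Set.range lenPrime) := by
  refine AddSubmonoid.closure_le.2 ?_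
  rintro _ ⟨e, -, rfl⟩
  have hinv : (1 : ℚ) / lenPrime e.1 ∈ MP (Set.range lenPrime) :=
    AddSubmonoid.subset_closure ⟨_, ⟨e.1, rfl⟩, rfl⟩
  rw [SetLike.mem_coe, genValue, div_eq_mul_one_div, ← nsmul_eq_mul]
  exact AddSubmonoid.nsmul_mem _ hinv _

theorem nonneg_of_mem_lengthMonoid {L : Set ℕ} {q : ℚ} (hq : q ∈ lengthMonoid L) : 0 ≤ q := by
  refine (AddSubmonoid.closure_le (S := AddSubmonoid.nonneg ℚ)).2 ?_ hq
  rintro _ ⟨e, -, rfl⟩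
  exact AddSubmonoid.mem_nonneg.2 (div_nonneg (Nat.cast_nonneg _) (Nat.cast_nonneg _))

theorem subset_lengthSet_one {L : Set ℕ} (hL : ∀ ℓ ∈ L, 2 ≤ ℓ) :
    L ⊆ LengthSet (lengthMonoid L) 1 := fun j hj => by
  obtain ⟨s, hcard, hs, hsum⟩ := exists_factorization_one hj (one_le_two.trans (hL j hj))
  refine ⟨s, hcard, fun a ha => ?_, hsum⟩
  obtain ⟨e, he, rfl⟩ := hs a ha
  exact isAtomOf_genValue hL he

theorem one_mem_lengthMonoid {L : Set ℕ} {j : ℕ} (hj : j ∈ L) (hj1 : 1 ≤ j) :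
    (1 : ℚ) ∈ lengthMonoid L := by
  obtain ⟨s, -, hs, hsum⟩ := exists_factorization_one hj hj1
  rw [← hsum]
  exact AddSubmonoid.multiset_sum_mem _ _ fun a ha => AddSubmonoid.subset_closure (hs a ha)

end LengthSetRealization

open LengthSetRealization

theorem stmt15 (L : Set ℕ) (hne : L.Nonempty) (h2 : ∀ ℓ ∈ L, 2 ≤ ℓ) :
    ∃ M : AddSubmonoid ℚ,
      (∀ x ∈ M, 0 ≤ x) ∧ AddACCP M ∧ (1 : ℚ) ∈ M ∧ LengthSet M 1 = L := by
  obtain ⟨j, hj⟩ := hne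
  have hP : ∀ q ∈ Set.range lenPrime, q.Prime := by
    rintro _ ⟨ℓ, rfl⟩
    exact lenPrime_prime ℓ
  exact ⟨lengthMonoid L, fun _ => nonneg_of_mem_lengthMonoid,
    addACCP_of_le_MP hP (lengthMonoid_le_MP L),
    one_mem_lengthMonoid hj (one_le_two.trans (h2 j hj)),
    (lengthSet_one_subset h2).antisymm (subset_lengthSet_one h2)⟩
end
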